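/- arXiv:1108.2366 — 2 statements merged into one kernel-verified Lean document; each statement's English description precedes it below -/
import Mathlib

section
/- Let Π = c^k_{ij}(x) ξ_k ∂_{ξᵢ} ⊗ ∂_{ξⱼ} + ρ^b_i(x) ∂_{ξᵢ} ∧ ∂_{x^b} be a linear bivector field on E* = ℝᵐ × ℝⁿ with c^k_{ij} = −c^k_{ji}, and for a smooth Hamiltonian H on E* let X_H = i_{dH}Π be the Hamiltonian vector field. Then for the standard volume form ω = dξ₁∧...∧dξₙ∧dx¹∧...∧dxᵐ, the divergence div_ω(X_H) equals (Σ_k c^k_{ik}(x) + Σ_a ∂ρ^a_i/∂x^a (x)) · ∂H/∂ξᵢ, i.e., it equals the vertical lift of the modular form φ^Π = (Σ_k c^k_{ik} + Σ_a ∂ρ^a_i/∂x^a) e^i applied to H. -/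
section helpers
variable {E : Type*} [NormedAddCommGroup E] [NormedSpace ℝ E]

lemma aux_diff_fderiv_apply {H : E → ℝ} (hH : ContDiff ℝ (⊤ : ℕ∞) H) (w p : E) :
    DifferentiableAt ℝ (fun q => fderiv ℝ H q w) p :=
  ((ContinuousLinearMap.apply ℝ ℝ w).differentiable.comp
    ((hH.fderiv_right (m := (⊤ : ℕ∞)) (by simp)).differentiable (by simp))) p

lemma aux_fderiv_fderiv_apply {H : E → ℝ} (hH : ContDiff ℝ (⊤ : ℕ∞) H) (p v w : E) :
    fderiv ℝ (fun q => fderiv ℝ H q w) p v = fderiv ℝ (fderiv ℝ H) p v w := by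
  rw [fderiv_clm_apply ((hH.fderiv_right (m := (⊤ : ℕ∞)) (by simp)).differentiable (by simp) p)
    (differentiableAt_const w)]
  simp

lemma aux_symm {H : E → ℝ} (hH : ContDiff ℝ (⊤ : ℕ∞) H) (p v w : E) :
    fderiv ℝ (fderiv ℝ H) p v w = fderiv ℝ (fderiv ℝ H) p w v :=
  (hH.contDiffAt.isSymmSndFDerivAt (by rw [minSmoothness_of_isRCLikeNormedField]; exact WithTop.coe_le_coe.mpr le_top)) v w

end helpers

lemma aux_fst {m n : ℕ} {f : (Fin m → ℝ) → ℝ} (hf : ContDiff ℝ (⊤ : ℕ∞) f)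
    (p v : (Fin m → ℝ) × (Fin n → ℝ)) :
    fderiv ℝ (fun q : (Fin m → ℝ) × (Fin n → ℝ) => f q.1) p v = fderiv ℝ f p.1 v.1 := by
  have h : HasFDerivAt (fun q : (Fin m → ℝ) × (Fin n → ℝ) => f q.1)
      ((fderiv ℝ f p.1).comp (ContinuousLinearMap.fst ℝ (Fin m → ℝ) (Fin n → ℝ))) p :=
    ((hf.differentiable (by simp) p.1).hasFDerivAt).comp p hasFDerivAt_fst
  rw [h.fderiv]; rfl

lemma aux_snd_coord {m n : ℕ} (k : Fin n) (p v : (Fin m → ℝ) × (Fin n → ℝ)) :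
    fderiv ℝ (fun q : (Fin m → ℝ) × (Fin n → ℝ) => q.2 k) p v = v.2 k := by
  change fderiv ℝ (⇑((ContinuousLinearMap.proj k).comp
    (ContinuousLinearMap.snd ℝ (Fin m → ℝ) (Fin n → ℝ)))) p v = v.2 k
  rw [ContinuousLinearMap.fderiv]; rfl

/-- For the linear bivector
`Π = c^k_{ij}(x) ξ_k ∂_{ξ_i}⊗∂_{ξ_j} + ρ^b_i(x) ∂_{ξ_i}∧∂_{x^b}` (with `c^k_{ij} = -c^k_{ji}`)
on `E* = ℝᵐ × ℝⁿ` and a smooth Hamiltonian `H`, the divergence of the Hamiltonian vector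
field `X_H = (c^k_{ij}ξ_k ∂H/∂ξ_i - ρ^a_j ∂H/∂x^a)∂_{ξ_j} + ρ^b_i (∂H/∂ξ_i)∂_{x^b}`
with respect to the standard volume form equals
`Σ_i (Σ_k c^k_{ik} + Σ_a ∂ρ^a_i/∂x^a) ∂H/∂ξ_i`, the vertical lift of the modular form
applied to `H`.  Partial derivatives are `fderiv` in the coordinate directions. -/
theorem stmt4 {m n : ℕ}
    (c : Fin n → Fin n → Fin n → (Fin m → ℝ) → ℝ)
    (ρ : Fin m → Fin n → (Fin m → ℝ) → ℝ)
    (hc : ∀ k i j x, c k i j x = - c k j i x)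
    (hcs : ∀ k i j, ContDiff ℝ (⊤ : ℕ∞) (c k i j))
    (hρs : ∀ a i, ContDiff ℝ (⊤ : ℕ∞) (ρ a i))
    (H : (Fin m → ℝ) × (Fin n → ℝ) → ℝ) (hH : ContDiff ℝ (⊤ : ℕ∞) H) :
    ∀ p : (Fin m → ℝ) × (Fin n → ℝ),
      (∑ b, fderiv ℝ
          (fun q : (Fin m → ℝ) × (Fin n → ℝ) =>
            ∑ i, ρ b i q.1 * fderiv ℝ H q ((0 : Fin m → ℝ), Pi.single i 1))
          p (Pi.single b 1, (0 : Fin n → ℝ)))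
      + (∑ j, fderiv ℝ
          (fun q : (Fin m → ℝ) × (Fin n → ℝ) =>
            (∑ i, ∑ k, c k i j q.1 * q.2 k * fderiv ℝ H q ((0 : Fin m → ℝ), Pi.single i 1))
            - ∑ a, ρ a j q.1 * fderiv ℝ H q (Pi.single a 1, (0 : Fin n → ℝ)))
          p ((0 : Fin m → ℝ), Pi.single j 1))
      = ∑ i, ((∑ k, c k i k p.1) + ∑ a, fderiv ℝ (ρ a i) p.1 (Pi.single a 1))
          * fderiv ℝ H p ((0 : Fin m → ℝ), Pi.single i 1) := by
  intro p
  have hρd : ∀ (a : Fin m) (i : Fin n),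
      DifferentiableAt ℝ (fun q : (Fin m → ℝ) × (Fin n → ℝ) => ρ a i q.1) p :=
    fun a i => ((hρs a i).differentiable (by simp) p.1).comp p differentiableAt_fst
  have hcd : ∀ (k i j : Fin n),
      DifferentiableAt ℝ (fun q : (Fin m → ℝ) × (Fin n → ℝ) => c k i j q.1) p :=
    fun k i j => ((hcs k i j).differentiable (by simp) p.1).comp p differentiableAt_fst
  have hξd : ∀ k : Fin n,
      DifferentiableAt ℝ (fun q : (Fin m → ℝ) × (Fin n → ℝ) => q.2 k) p :=
    fun k => ((ContinuousLinearMap.proj k).comp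
      (ContinuousLinearMap.snd ℝ (Fin m → ℝ) (Fin n → ℝ))).differentiableAt
  have h1 : ∀ b : Fin m,
      fderiv ℝ (fun q : (Fin m → ℝ) × (Fin n → ℝ) =>
          ∑ i, ρ b i q.1 * fderiv ℝ H q ((0:Fin m → ℝ), Pi.single i 1)) p
            (Pi.single b 1, (0:Fin n → ℝ))
      = ∑ i, (fderiv ℝ (ρ b i) p.1 (Pi.single b 1) * fderiv ℝ H p ((0:Fin m → ℝ), Pi.single i 1)
          + ρ b i p.1 * fderiv ℝ (fderiv ℝ H) p (Pi.single b 1, (0:Fin n → ℝ))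
              ((0:Fin m → ℝ), Pi.single i 1)) := by
    intro b
    rw [fderiv_fun_sum (fun i _ => (hρd b i).fun_mul (aux_diff_fderiv_apply hH _ p))]
    rw [ContinuousLinearMap.sum_apply]
    refine Finset.sum_congr rfl fun i _ => ?_
    rw [fderiv_fun_mul (hρd b i) (aux_diff_fderiv_apply hH _ p)]
    simp only [ContinuousLinearMap.add_apply, ContinuousLinearMap.smul_apply, smul_eq_mul]
    rw [aux_fderiv_fderiv_apply hH, aux_fst (hρs b i)]
    ring
  have h2 : ∀ j : Fin n,
      fderiv ℝ (fun q : (Fin m → ℝ) × (Fin n → ℝ) =>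
          (∑ i, ∑ k, c k i j q.1 * q.2 k * fderiv ℝ H q ((0:Fin m → ℝ), Pi.single i 1))
          - ∑ a, ρ a j q.1 * fderiv ℝ H q (Pi.single a 1, (0:Fin n → ℝ))) p
            ((0:Fin m → ℝ), Pi.single j 1)
      = (∑ i, (c j i j p.1 * fderiv ℝ H p ((0:Fin m → ℝ), Pi.single i 1)
            + ∑ k, c k i j p.1 * p.2 k *
              fderiv ℝ (fderiv ℝ H) p ((0:Fin m → ℝ), Pi.single j 1)
                ((0:Fin m → ℝ), Pi.single i 1)))
        - ∑ a, ρ a j p.1 *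
            fderiv ℝ (fderiv ℝ H) p ((0:Fin m → ℝ), Pi.single j 1)
              (Pi.single a 1, (0:Fin n → ℝ)) := by
    intro j
    have hdik : ∀ (i k : Fin n), DifferentiableAt ℝ (fun q : (Fin m → ℝ) × (Fin n → ℝ) =>
        c k i j q.1 * q.2 k * fderiv ℝ H q ((0:Fin m → ℝ), Pi.single i 1)) p :=
      fun i k => ((hcd k i j).fun_mul (hξd k)).fun_mul (aux_diff_fderiv_apply hH _ p)
    have hA : DifferentiableAt ℝ (fun q : (Fin m → ℝ) × (Fin n → ℝ) =>
        ∑ i, ∑ k, c k i j q.1 * q.2 k * fderiv ℝ H q ((0:Fin m → ℝ), Pi.single i 1)) p :=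
      DifferentiableAt.fun_sum fun i _ => DifferentiableAt.fun_sum fun k _ => hdik i k
    have hB : DifferentiableAt ℝ (fun q : (Fin m → ℝ) × (Fin n → ℝ) =>
        ∑ a, ρ a j q.1 * fderiv ℝ H q (Pi.single a 1, (0:Fin n → ℝ))) p :=
      DifferentiableAt.fun_sum fun a _ => (hρd a j).fun_mul (aux_diff_fderiv_apply hH _ p)
    rw [fderiv_fun_sub hA hB, ContinuousLinearMap.sub_apply]
    congr 1
    · rw [fderiv_fun_sum (fun i _ => DifferentiableAt.fun_sum fun k _ => hdik i k),
        ContinuousLinearMap.sum_apply]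
      refine Finset.sum_congr rfl fun i _ => ?_
      rw [fderiv_fun_sum (fun k _ => hdik i k), ContinuousLinearMap.sum_apply]
      have hterm : ∀ k, (fderiv ℝ (fun q : (Fin m → ℝ) × (Fin n → ℝ) =>
          c k i j q.1 * q.2 k * fderiv ℝ H q ((0:Fin m → ℝ), Pi.single i 1)) p)
            ((0:Fin m → ℝ), Pi.single j 1)
          = c k i j p.1 * (Pi.single j 1 : Fin n → ℝ) k
              * fderiv ℝ H p ((0:Fin m → ℝ), Pi.single i 1)
            + c k i j p.1 * p.2 k *
              fderiv ℝ (fderiv ℝ H) p ((0:Fin m → ℝ), Pi.single j 1)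
                ((0:Fin m → ℝ), Pi.single i 1) := by
        intro k
        rw [fderiv_fun_mul ((hcd k i j).fun_mul (hξd k)) (aux_diff_fderiv_apply hH _ p)]
        simp only [ContinuousLinearMap.add_apply, ContinuousLinearMap.smul_apply, smul_eq_mul]
        rw [fderiv_fun_mul (hcd k i j) (hξd k)]
        simp only [ContinuousLinearMap.add_apply, ContinuousLinearMap.smul_apply, smul_eq_mul]
        rw [aux_fderiv_fderiv_apply hH, aux_fst (hcs k i j), aux_snd_coord]
        simp only [map_zero]
        ring
      rw [Finset.sum_congr rfl fun k _ => hterm k, Finset.sum_add_distrib]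
      congr 1
      simp [Pi.single_apply, mul_ite, Finset.mul_sum]
    · rw [fderiv_fun_sum (fun a _ => (hρd a j).fun_mul (aux_diff_fderiv_apply hH _ p)),
        ContinuousLinearMap.sum_apply]
      refine Finset.sum_congr rfl fun a _ => ?_
      rw [fderiv_fun_mul (hρd a j) (aux_diff_fderiv_apply hH _ p)]
      simp only [ContinuousLinearMap.add_apply, ContinuousLinearMap.smul_apply, smul_eq_mul]
      rw [aux_fderiv_fderiv_apply hH, aux_fst (hρs a j)]
      simp [map_zero]
  rw [Finset.sum_congr rfl fun b _ => h1 b, Finset.sum_congr rfl fun j _ => h2 j]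
  simp only [Finset.sum_add_distrib, Finset.sum_sub_distrib]
  have hS : (∑ j : Fin n, ∑ i : Fin n, ∑ k : Fin n, c k i j p.1 * p.2 k *
      (fderiv ℝ (fderiv ℝ H) p ((0:Fin m → ℝ), Pi.single j 1)) ((0:Fin m → ℝ), Pi.single i 1)) = 0 := by
    have key : ∀ i j : Fin n,
        (∑ k : Fin n, c k i j p.1 * p.2 k *
          (fderiv ℝ (fderiv ℝ H) p ((0:Fin m → ℝ), Pi.single j 1)) ((0:Fin m → ℝ), Pi.single i 1))
        = - ∑ k : Fin n, c k j i p.1 * p.2 k *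
          (fderiv ℝ (fderiv ℝ H) p ((0:Fin m → ℝ), Pi.single i 1)) ((0:Fin m → ℝ), Pi.single j 1) := by
      intro i j
      rw [← Finset.sum_neg_distrib]
      refine Finset.sum_congr rfl fun k _ => ?_
      rw [hc k i j, aux_symm hH p ((0:Fin m → ℝ), Pi.single j 1) ((0:Fin m → ℝ), Pi.single i 1)]
      ring
    have hSS : (∑ j : Fin n, ∑ i : Fin n, ∑ k : Fin n, c k i j p.1 * p.2 k *
        (fderiv ℝ (fderiv ℝ H) p ((0:Fin m → ℝ), Pi.single j 1)) ((0:Fin m → ℝ), Pi.single i 1))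
        = - (∑ j : Fin n, ∑ i : Fin n, ∑ k : Fin n, c k i j p.1 * p.2 k *
        (fderiv ℝ (fderiv ℝ H) p ((0:Fin m → ℝ), Pi.single j 1)) ((0:Fin m → ℝ), Pi.single i 1)) := by
      calc (∑ j : Fin n, ∑ i : Fin n, ∑ k : Fin n, c k i j p.1 * p.2 k *
            (fderiv ℝ (fderiv ℝ H) p ((0:Fin m → ℝ), Pi.single j 1)) ((0:Fin m → ℝ), Pi.single i 1))
          = ∑ j : Fin n, ∑ i : Fin n, - ∑ k : Fin n, c k j i p.1 * p.2 k *
            (fderiv ℝ (fderiv ℝ H) p ((0:Fin m → ℝ), Pi.single i 1)) ((0:Fin m → ℝ), Pi.single j 1) :=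
            Finset.sum_congr rfl fun j _ => Finset.sum_congr rfl fun i _ => key i j
        _ = - ∑ j : Fin n, ∑ i : Fin n, ∑ k : Fin n, c k j i p.1 * p.2 k *
            (fderiv ℝ (fderiv ℝ H) p ((0:Fin m → ℝ), Pi.single i 1)) ((0:Fin m → ℝ), Pi.single j 1) := by
            simp [Finset.sum_neg_distrib]
        _ = - (∑ j : Fin n, ∑ i : Fin n, ∑ k : Fin n, c k i j p.1 * p.2 k *
            (fderiv ℝ (fderiv ℝ H) p ((0:Fin m → ℝ), Pi.single j 1)) ((0:Fin m → ℝ), Pi.single i 1)) := by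
            rw [Finset.sum_comm]
    linarith
  have hP5 : (∑ j : Fin n, ∑ a : Fin m, ρ a j p.1 *
      (fderiv ℝ (fderiv ℝ H) p ((0:Fin m → ℝ), Pi.single j 1)) (Pi.single a 1, (0:Fin n → ℝ)))
      = ∑ b : Fin m, ∑ i : Fin n, ρ b i p.1 *
      (fderiv ℝ (fderiv ℝ H) p (Pi.single b 1, (0:Fin n → ℝ))) ((0:Fin m → ℝ), Pi.single i 1) := by
    rw [Finset.sum_comm]
    refine Finset.sum_congr rfl fun a _ => Finset.sum_congr rfl fun j _ => ?_
    rw [aux_symm hH p ((0:Fin m → ℝ), Pi.single j 1) (Pi.single a 1, (0:Fin n → ℝ))]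
  have hR : (∑ i : Fin n, ((∑ k : Fin n, c k i k p.1)
        + ∑ a : Fin m, fderiv ℝ (ρ a i) p.1 (Pi.single a 1))
        * fderiv ℝ H p ((0:Fin m → ℝ), Pi.single i 1))
      = (∑ k : Fin n, ∑ i : Fin n, c k i k p.1 * fderiv ℝ H p ((0:Fin m → ℝ), Pi.single i 1))
        + ∑ a : Fin m, ∑ i : Fin n, fderiv ℝ (ρ a i) p.1 (Pi.single a 1)
            * fderiv ℝ H p ((0:Fin m → ℝ), Pi.single i 1) := by
    simp only [add_mul, Finset.sum_mul, Finset.sum_add_distrib]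
    rw [Finset.sum_comm (f := fun i k => c k i k p.1 * fderiv ℝ H p ((0:Fin m → ℝ), Pi.single i 1)),
      Finset.sum_comm (f := fun i a => fderiv ℝ (ρ a i) p.1 (Pi.single a 1)
        * fderiv ℝ H p ((0:Fin m → ℝ), Pi.single i 1))]
  rw [hS, hP5, hR]
  ring
end

section
/- Let Ω = e^χ σ̃ be a volume form on E*, where σ̃ is a homogeneous volume form with modular form φ^Π_σ. Then Ω is invariant under all Hamiltonian vector fields X_H (i.e., div_Ω(X_H) = 0 for all H) if and only if the vertical lift (φ^Π_σ)^v equals the Hamiltonian vector field X_χ. -/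
lemma pair_decomp {m n : ℕ} (v : Fin m → ℝ) (w : Fin n → ℝ) :
    ((v, w) : (Fin m → ℝ) × (Fin n → ℝ)) =
      (∑ a, v a • (((Pi.single a 1 : Fin m → ℝ)), (0 : Fin n → ℝ)))
        + ∑ i, w i • ((0 : Fin m → ℝ), (Pi.single i 1 : Fin n → ℝ)) := by
  ext j
  · simp [Prod.fst_sum, Finset.sum_apply, Pi.single_apply]
  · simp [Prod.snd_sum, Finset.sum_apply, Pi.single_apply]

lemma clm_expand {m n : ℕ} (L : ((Fin m → ℝ) × (Fin n → ℝ)) →L[ℝ] ℝ)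
    (v : Fin m → ℝ) (w : Fin n → ℝ) :
    L (v, w) = (∑ a, v a * L (Pi.single a 1, 0))
      + ∑ i, w i * L ((0 : Fin m → ℝ), Pi.single i 1) := by
  rw [pair_decomp v w, map_add, map_sum, map_sum]
  congr 1
  · refine Finset.sum_congr rfl fun a _ => ?_
    rw [map_smul, smul_eq_mul]
  · refine Finset.sum_congr rfl fun i _ => ?_
    rw [map_smul, smul_eq_mul]

lemma fderiv_expand {m n : ℕ} (f : (Fin m → ℝ) × (Fin n → ℝ) → ℝ)
    (p : (Fin m → ℝ) × (Fin n → ℝ)) (v : Fin m → ℝ) (w : Fin n → ℝ) :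
    fderiv ℝ f p (v, w) = (∑ a, v a * fderiv ℝ f p (Pi.single a 1, 0))
      + ∑ i, w i * fderiv ℝ f p ((0 : Fin m → ℝ), Pi.single i 1) :=
  clm_expand _ v w

noncomputable def Lx {m n : ℕ} (a : Fin m) : ((Fin m → ℝ) × (Fin n → ℝ)) →L[ℝ] ℝ :=
  (ContinuousLinearMap.proj a).comp (ContinuousLinearMap.fst ℝ (Fin m → ℝ) (Fin n → ℝ))

noncomputable def Lxi {m n : ℕ} (i : Fin n) : ((Fin m → ℝ) × (Fin n → ℝ)) →L[ℝ] ℝ :=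
  (ContinuousLinearMap.proj i).comp (ContinuousLinearMap.snd ℝ (Fin m → ℝ) (Fin n → ℝ))

lemma Lx_apply {m n : ℕ} (a : Fin m) (q : (Fin m → ℝ) × (Fin n → ℝ)) : Lx a q = q.1 a := rfl
lemma Lxi_apply {m n : ℕ} (i : Fin n) (q : (Fin m → ℝ) × (Fin n → ℝ)) : Lxi i q = q.2 i := rfl

lemma Lx_contDiff {m n : ℕ} (a : Fin m) :
    ContDiff ℝ (⊤ : ℕ∞) (fun q : (Fin m → ℝ) × (Fin n → ℝ) => q.1 a) := (Lx a).contDiff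

lemma Lxi_contDiff {m n : ℕ} (i : Fin n) :
    ContDiff ℝ (⊤ : ℕ∞) (fun q : (Fin m → ℝ) × (Fin n → ℝ) => q.2 i) := (Lxi i).contDiff

lemma Lx_fderiv {m n : ℕ} (a : Fin m) (p : (Fin m → ℝ) × (Fin n → ℝ)) :
    fderiv ℝ (fun q : (Fin m → ℝ) × (Fin n → ℝ) => q.1 a) p = Lx a := (Lx a).fderiv

lemma Lxi_fderiv {m n : ℕ} (i : Fin n) (p : (Fin m → ℝ) × (Fin n → ℝ)) :
    fderiv ℝ (fun q : (Fin m → ℝ) × (Fin n → ℝ) => q.2 i) p = Lxi i := (Lxi i).fderiv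

lemma alg {m n : ℕ} (c : Fin n → Fin n → Fin n → ℝ) (hc : ∀ k i j, c k i j = - c k j i)
    (ρ : Fin m → Fin n → ℝ) (ξ : Fin n → ℝ) (φ : Fin n → ℝ)
    (A C : Fin m → ℝ) (B D : Fin n → ℝ)
    (h1 : ∀ b, (0:ℝ) = ∑ i, ρ b i * B i)
    (h2 : ∀ j, φ j = (∑ i, ∑ k, c k i j * ξ k * B i) - ∑ a, ρ a j * A a) :
    (∑ i, φ i * D i) + ((∑ a, (∑ i, ρ a i * D i) * A a)
      + ∑ j, ((∑ i, ∑ k, c k i j * ξ k * D i) - ∑ a, ρ a j * C a) * B j) = 0 := by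
  simp only [h2, sub_mul, Finset.sum_sub_distrib, Finset.sum_mul]
  have E1 : (∑ x : Fin m, ∑ i : Fin n, ρ x i * D i * A x)
      = ∑ x : Fin n, ∑ i : Fin m, ρ i x * A i * D x := by
    rw [Finset.sum_comm]
    exact Finset.sum_congr rfl fun x _ => Finset.sum_congr rfl fun i _ => by ring
  have E2 : (∑ x : Fin n, ∑ i : Fin m, ρ i x * C i * B x) = 0 := by
    rw [Finset.sum_comm]
    refine Finset.sum_eq_zero fun a _ => ?_
    have : (∑ x : Fin n, ρ a x * C a * B x) = C a * ∑ x : Fin n, ρ a x * B x := by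
      rw [Finset.mul_sum]
      exact Finset.sum_congr rfl fun x _ => by ring
    rw [this, ← h1 a, mul_zero]
  have E3 : (∑ x : Fin n, ∑ x_1 : Fin n, ∑ i : Fin n, c i x_1 x * ξ i * D x_1 * B x)
      = - ∑ x : Fin n, ∑ x_1 : Fin n, ∑ i : Fin n, c i x_1 x * ξ i * B x_1 * D x := by
    rw [Finset.sum_comm, ← Finset.sum_neg_distrib]
    refine Finset.sum_congr rfl fun x _ => ?_
    rw [← Finset.sum_neg_distrib]
    refine Finset.sum_congr rfl fun y _ => ?_
    rw [← Finset.sum_neg_distrib]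
    refine Finset.sum_congr rfl fun k _ => ?_
    rw [hc]; ring
  linarith [E1, E2, E3]

/-- Let `Ω = e^χ σ̃` where `σ̃` is a homogeneous volume form on `E*` with
modular form `φ^Π_σ`.  Then `Ω` is invariant under all Hamiltonian vector fields
(`div_Ω(X_H) = 0` for all smooth `H`) iff the vertical lift `(φ^Π_σ)^v` equals the
Hamiltonian vector field `X_χ`.

Here `div_Ω(X_H) = div_{σ̃}(X_H) + X_H(χ) = (φ^Π_σ)^v(H) + dχ(X_H)`, `X_H` is given by
its coordinate formula, and the vertical lift of `φ` at `p = (x,ξ)` is the vector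
`(0, (φ_i(x))_i)`. -/
theorem stmt6 {m n : ℕ}
    (c : Fin n → Fin n → Fin n → (Fin m → ℝ) → ℝ)
    (ρ : Fin m → Fin n → (Fin m → ℝ) → ℝ)
    (hc : ∀ k i j x, c k i j x = - c k j i x)
    (φ : Fin n → (Fin m → ℝ) → ℝ)
    (χ : (Fin m → ℝ) × (Fin n → ℝ) → ℝ) (hχ : ContDiff ℝ (⊤ : ℕ∞) χ)
    (XH : ((Fin m → ℝ) × (Fin n → ℝ) → ℝ) →
      ((Fin m → ℝ) × (Fin n → ℝ)) → (Fin m → ℝ) × (Fin n → ℝ))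
    (hXH : ∀ H p, XH H p =
      (fun b => ∑ i, ρ b i p.1 * fderiv ℝ H p ((0 : Fin m → ℝ), Pi.single i 1),
       fun j => (∑ i, ∑ k, c k i j p.1 * p.2 k * fderiv ℝ H p ((0 : Fin m → ℝ), Pi.single i 1))
                - ∑ a, ρ a j p.1 * fderiv ℝ H p (Pi.single a 1, (0 : Fin n → ℝ)))) :
    (∀ H : (Fin m → ℝ) × (Fin n → ℝ) → ℝ, ContDiff ℝ (⊤ : ℕ∞) H →
        ∀ p, (∑ i, φ i p.1 * fderiv ℝ H p ((0 : Fin m → ℝ), Pi.single i 1))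
          + fderiv ℝ χ p (XH H p) = 0)
    ↔ (∀ p : (Fin m → ℝ) × (Fin n → ℝ),
        (((0 : Fin m → ℝ), fun i => φ i p.1) : (Fin m → ℝ) × (Fin n → ℝ)) = XH χ p) := by
  constructor
  · intro h p
    rw [hXH, Prod.mk.injEq]
    constructor
    · funext b
      have hb := h (fun q => q.1 b) (Lx_contDiff b) p
      rw [hXH] at hb
      rw [Lx_fderiv] at hb
      rw [clm_expand (fderiv ℝ χ p)] at hb
      simp only [Lx_apply, Pi.zero_apply, Pi.single_apply, mul_zero, zero_mul,
        Finset.sum_const_zero, mul_ite, mul_one, Finset.sum_ite_eq, Finset.mem_univ,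
        if_true, zero_add, add_zero, zero_sub, neg_mul, Finset.sum_neg_distrib,
        neg_eq_zero, mul_comm] at hb
      simpa using hb.symm
    · funext j
      have hj := h (fun q => q.2 j) (Lxi_contDiff j) p
      rw [hXH] at hj
      rw [Lxi_fderiv] at hj
      rw [clm_expand (fderiv ℝ χ p)] at hj
      simp only [Lxi_apply, Pi.zero_apply, Pi.single_apply, mul_zero, zero_mul,
        Finset.sum_const_zero, mul_ite, mul_one, Finset.sum_ite_eq, Finset.mem_univ,
        if_true, zero_add, add_zero, sub_zero, Finset.sum_ite_irrel,
        Finset.sum_const_zero] at hj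
      have key : (∑ i, ∑ k, c k i j p.1 * p.2 k * fderiv ℝ χ p ((0 : Fin m → ℝ), Pi.single i 1))
          = - ∑ x, (∑ k, c k j x p.1 * p.2 k) * fderiv ℝ χ p ((0 : Fin m → ℝ), Pi.single x 1) := by
        rw [← Finset.sum_neg_distrib]
        refine Finset.sum_congr rfl fun i _ => ?_
        rw [← neg_mul, ← Finset.sum_neg_distrib, Finset.sum_mul]
        refine Finset.sum_congr rfl fun k _ => ?_
        rw [hc]; ring
      linarith [hj, key]
  · intro h H hH p
    have hp := h p
    rw [hXH, Prod.mk.injEq] at hp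
    obtain ⟨hp1, hp2⟩ := hp
    have h1 : ∀ b, (0:ℝ) = ∑ i, ρ b i p.1 *
        fderiv ℝ χ p ((0 : Fin m → ℝ), Pi.single i 1) := fun b => by
      simpa using congrFun hp1 b
    have h2 : ∀ j, φ j p.1 = (∑ i, ∑ k, c k i j p.1 * p.2 k *
          fderiv ℝ χ p ((0 : Fin m → ℝ), Pi.single i 1))
        - ∑ a, ρ a j p.1 * fderiv ℝ χ p (Pi.single a 1, (0 : Fin n → ℝ)) :=
      fun j => congrFun hp2 j
    rw [hXH, clm_expand (fderiv ℝ χ p)]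
    exact alg (fun k i j => c k i j p.1) (fun k i j => hc k i j p.1)
      (fun a i => ρ a i p.1) p.2 (fun i => φ i p.1)
      (fun a => fderiv ℝ χ p (Pi.single a 1, 0))
      (fun a => fderiv ℝ H p (Pi.single a 1, 0))
      (fun i => fderiv ℝ χ p ((0 : Fin m → ℝ), Pi.single i 1))
      (fun i => fderiv ℝ H p ((0 : Fin m → ℝ), Pi.single i 1)) h1 h2
end
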